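/- If Pₖ = c + r rₖ + (1/2)(c² + r² + 2r c·rₖ)n + n̄ for four unit vectors rₖ (k = 1,…,4) on a sphere of center c and radius r, then P₁∧P₂∧P₃∧P₄ = (C − (1/2)r²n) i_s N, where i_s = (p₁−p₂)∧(p₂−p₃)∧(p₃−p₄) with pₖ = c + r rₖ, C = c + (1/2)c²n + n̄, and N = n∧n̄. -/

import Mathlib

noncomputable section
open scoped RealInnerProductSpace

/-- Euclidean 3-space. -/
abbrev E3 : Type := EuclideanSpace ℝ (Fin 3)

/-- The 5-dimensional space ℝ^{4,1}: Euclidean part plus coefficients of the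
null vectors n (infinity) and n̄ (origin). -/
abbrev V5 : Type := E3 × ℝ × ℝ

/-- Symmetric bilinear form of signature (4,1):
`⟪p,q⟫` on the Euclidean part, and `n·n̄ = -1` on the null pair. -/
def B5 : LinearMap.BilinForm ℝ V5 := LinearMap.mk₂ ℝ
  (fun x y => ⟪x.1, y.1⟫ - x.2.1 * y.2.2 - x.2.2 * y.2.1)
  (fun m₁ m₂ y => by simp only [Prod.fst_add, Prod.snd_add, inner_add_left]; ring)
  (fun c m y => by simp only [Prod.smul_fst, Prod.smul_snd, smul_eq_mul, real_inner_smul_left]; ring)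
  (fun m y₁ y₂ => by simp only [Prod.fst_add, Prod.snd_add, inner_add_right]; ring)
  (fun c m y => by simp only [Prod.smul_fst, Prod.smul_snd, smul_eq_mul, real_inner_smul_right]; ring)

/-- The quadratic form of R_{4,1}. -/
def Q5 : QuadraticForm ℝ V5 := B5.toQuadraticMap

/-- The Clifford geometric algebra R_{4,1}. -/
abbrev Cl : Type := CliffordAlgebra Q5

def ι5 : V5 →ₗ[ℝ] Cl := CliffordAlgebra.ι Q5

/-- Embedding of a Euclidean vector as a grade-1 element. -/
def ev (p : E3) : Cl := ι5 (p, 0, 0)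

/-- The null vector n representing infinity. -/
def nInf : Cl := ι5 (0, 1, 0)

/-- The null vector n̄ representing the origin. -/
def nOri : Cl := ι5 (0, 0, 1)

/-- The conformal point P = p + (1/2)p² n + n̄. -/
def cpt (p : E3) : Cl := ι5 (p, ⟪p, p⟫ / 2, 1)

/-- Outer (wedge) product of two vectors (grade-1 elements): antisymmetrized
geometric product. -/
def w2 (a b : Cl) : Cl := (2:ℝ)⁻¹ • (a * b - b * a)

/-- Outer (wedge) product of three vectors. -/
def w3 (a b c : Cl) : Cl := (6:ℝ)⁻¹ •
  (a*b*c - a*c*b - b*a*c + b*c*a + c*a*b - c*b*a)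

/-- Outer (wedge) product of a vector with a bivector. -/
def vwB (v B : Cl) : Cl := (2:ℝ)⁻¹ • (v * B + B * v)

/-- Left contraction of a vector into a bivector. -/
def lcontr (v B : Cl) : Cl := (2:ℝ)⁻¹ • (v * B - B * v)

/-- The Minkowski plane bivector N = n ∧ n̄. -/
def Nb : Cl := w2 nInf nOri

/-- Outer (wedge) product of four vectors. -/
def w4 (a b c d : Cl) : Cl := (24:ℝ)⁻¹ •
  (a*b*c*d - a*b*d*c - a*c*b*d + a*c*d*b + a*d*b*c - a*d*c*b - b*a*c*d + b*a*d*c + b*c*a*d - b*c*d*a - b*d*a*c + b*d*c*a + c*a*b*d - c*a*d*b - c*b*a*d + c*b*d*a + c*d*a*b - c*d*b*a - d*a*b*c + d*a*c*b + d*b*a*c - d*b*c*a - d*c*a*b + d*c*b*a)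

/-! Writing `pₖ = c + qₖ` with `|qₖ| = r`, every conformal point splits as `Pₖ = Y + τ(qₖ)`, where
`Y = C + (r²/2) n` does not depend on `k` and `τ(q) = q + (c·q) n` is the translate of the
Euclidean vector `q` by `c`. Expanding the wedge, `τ(q₁)∧τ(q₂)∧τ(q₃)∧τ(q₄)` vanishes because the
`τ(qₖ)` lie in a 3-space, and what is left is `-Y∧τ(e₁)∧τ(e₂)∧τ(e₃)` with `eₖ = pₖ - pₖ₊₁`.
Since `Y` is orthogonal to every `τ(e)`, this is the geometric product `-Y (τ(e₁)∧τ(e₂)∧τ(e₃))`.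
Both it and `(C - (r²/2) n) i_s N` are alternating in `(e₁, e₂, e₃)`, so both are `det(e₁, e₂, e₃)`
times their value on the standard basis, where they agree by a computation with the generators. -/

theorem mul_mul_eq_of_mul_eq {R : Type*} [Semigroup R] {a b c : R} (h : a * b = c) (x : R) :
    a * (b * x) = c * x := by
  rw [← mul_assoc, h]

theorem AlternatingMap.map_eq_basis_det_smul {ι R M N : Type*} [CommRing R] [AddCommGroup M]
    [Module R M] [AddCommGroup N] [Module R N] [Fintype ι] [DecidableEq ι]
    (e : Module.Basis ι R M) (f : M [⋀^ι]→ₗ[R] N) (v : ι → M) : f v = e.det v • f e := by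
  suffices f = e.det.smulRight (f e) from DFunLike.congr_fun this v
  refine e.ext_alternating fun i hi => ?_
  let σ : Equiv.Perm ι := Equiv.ofBijective i (Finite.injective_iff_bijective.1 hi)
  change f (e ∘ σ) = e.det (e ∘ σ) • f e
  simp [AlternatingMap.map_perm, Module.Basis.det_self]

def w3Alternating : Cl [⋀^Fin 3]→ₗ[ℝ] Cl where
  toFun v := w3 (v 0) (v 1) (v 2)
  map_update_add' := by
    intro _ m i x y
    -- `Function.update` uses an arbitrary `DecidableEq` instance; `simp` needs the standard one
    obtain rfl : ‹DecidableEq (Fin 3)› = instDecidableEqFin 3 := Subsingleton.elim _ _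
    match i with
    | 0 | 1 | 2 => simp [w3, add_mul, mul_add]; module
  map_update_smul' := by
    intro _ m i s x
    obtain rfl : ‹DecidableEq (Fin 3)› = instDecidableEqFin 3 := Subsingleton.elim _ _
    match i with
    | 0 | 1 | 2 => simp [w3]; module
  map_eq_zero_of_eq' v i j hv hij := by
    match i, j with
    | 0, 0 | 1, 1 | 2, 2 => exact absurd rfl hij
    | 0, 1 | 0, 2 | 1, 0 | 1, 2 | 2, 0 | 2, 1 => simp only [w3, hv]; module

set_option maxHeartbeats 1000000 in
def w4Alternating : Cl [⋀^Fin 4]→ₗ[ℝ] Cl where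
  toFun v := w4 (v 0) (v 1) (v 2) (v 3)
  map_update_add' := by
    intro _ m i x y
    obtain rfl : ‹DecidableEq (Fin 4)› = instDecidableEqFin 4 := Subsingleton.elim _ _
    match i with
    | 0 | 1 | 2 | 3 => simp [w4, add_mul, mul_add]; module
  map_update_smul' := by
    intro _ m i s x
    obtain rfl : ‹DecidableEq (Fin 4)› = instDecidableEqFin 4 := Subsingleton.elim _ _
    match i with
    | 0 | 1 | 2 | 3 => simp [w4]; module
  map_eq_zero_of_eq' v i j hv hij := by
    match i, j with
    | 0, 0 | 1, 1 | 2, 2 | 3, 3 => exact absurd rfl hij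
    | 0, 1 | 0, 2 | 0, 3 | 1, 0 | 1, 2 | 1, 3 | 2, 0 | 2, 1 | 2, 3 | 3, 0 | 3, 1 | 3, 2 =>
      simp only [w4, hv]; module

set_option maxHeartbeats 400000 in
theorem w4_const_add (y u₁ u₂ u₃ u₄ : Cl) :
    w4 (y + u₁) (y + u₂) (y + u₃) (y + u₄) =
      w4 u₁ u₂ u₃ u₄ - w4 y (u₁ - u₂) (u₂ - u₃) (u₃ - u₄) := by
  simp only [w4, add_mul, mul_add, sub_mul, mul_sub]
  module

theorem w4_map_eq_zero_of_finrank_lt {M : Type*} [AddCommGroup M] [Module ℝ M]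
    [FiniteDimensional ℝ M] (hM : Module.finrank ℝ M < 4) (L : M →ₗ[ℝ] Cl) (a b c d : M) :
    w4 (L a) (L b) (L c) (L d) = 0 :=
  (w4Alternating.compLinearMap L).map_linearDependent ![a, b, c, d] fun h =>
    (h.fintype_card_le_finrank.trans_lt hM).false

theorem w3_map_eq_det_smul {M : Type*} [AddCommGroup M] [Module ℝ M]
    (e : Module.Basis (Fin 3) ℝ M) (L : M →ₗ[ℝ] Cl) (x y z : M) :
    w3 (L x) (L y) (L z) = e.det ![x, y, z] • w3 (L (e 0)) (L (e 1)) (L (e 2)) :=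
  (w3Alternating.compLinearMap L).map_eq_basis_det_smul e ![x, y, z]

theorem w3_eq_mul_of_anticomm {a b c : Cl} (hab : b * a = -(a * b)) (hac : c * a = -(a * c))
    (hbc : c * b = -(b * c)) : w3 a b c = a * b * c := by
  simp only [w3, mul_assoc, hab, hac, hbc, mul_mul_eq_of_mul_eq hab, neg_mul, mul_neg, neg_neg]
  module

theorem w4_eq_mul_w3_of_anticomm {y a b c : Cl} (ha : a * y = -(y * a)) (hb : b * y = -(y * b))
    (hc : c * y = -(y * c)) : w4 y a b c = y * w3 a b c := by
  simp only [w4, w3, mul_assoc, ha, hb, hc, mul_mul_eq_of_mul_eq ha, mul_mul_eq_of_mul_eq hb,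
    mul_mul_eq_of_mul_eq hc, neg_mul, mul_neg, neg_neg, mul_smul_comm, mul_add, mul_sub]
  module

theorem B5_apply (x y : V5) : B5 x y = ⟪x.1, y.1⟫ - x.2.1 * y.2.2 - x.2.2 * y.2.1 := rfl

theorem ι5_mul_ι5_add_swap (x y : V5) :
    ι5 x * ι5 y + ι5 y * ι5 x = algebraMap ℝ Cl (2 * B5 x y) := by
  have hpolar : QuadraticMap.polar Q5 x y = 2 * B5 x y := by
    rw [Q5, LinearMap.BilinMap.polar_toQuadraticMap, B5_apply, B5_apply, real_inner_comm]
    ring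
  rw [← hpolar]
  exact CliffordAlgebra.ι_mul_ι_add_swap x y

theorem ι5_mul_ι5_of_B5_eq_zero {x y : V5} (h : B5 x y = 0) :
    ι5 y * ι5 x = -(ι5 x * ι5 y) := by
  rw [eq_neg_iff_add_eq_zero, add_comm, ι5_mul_ι5_add_swap, h, mul_zero, map_zero]

theorem ι5_mul_self (x : V5) : ι5 x * ι5 x = algebraMap ℝ Cl (B5 x x) :=
  CliffordAlgebra.ι_sq_scalar Q5 x

theorem ι5_mk (p : E3) (a b : ℝ) : ι5 (p, a, b) = ev p + a • nInf + b • nOri := by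
  simp only [ev, nInf, nOri, ← map_smul, ← map_add, Prod.smul_mk, Prod.mk_add_mk]
  simp

theorem ev_mul_ev_of_inner_eq_zero {p q : E3} (h : ⟪p, q⟫ = 0) : ev q * ev p = -(ev p * ev q) :=
  ι5_mul_ι5_of_B5_eq_zero (by simpa [B5_apply])

theorem ev_single_mul_self (i : Fin 3) :
    ev (EuclideanSpace.single i 1) * ev (EuclideanSpace.single i 1) = 1 := by
  simp [ev, ι5_mul_self, B5_apply]

theorem nInf_mul_self : nInf * nInf = 0 := by
  simp [nInf, ι5_mul_self, B5_apply]

theorem nOri_mul_self : nOri * nOri = 0 := by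
  simp [nOri, ι5_mul_self, B5_apply]

theorem nInf_mul_ev (p : E3) : nInf * ev p = -(ev p * nInf) :=
  ι5_mul_ι5_of_B5_eq_zero (by simp [B5_apply])

theorem nOri_mul_ev (p : E3) : nOri * ev p = -(ev p * nOri) :=
  ι5_mul_ι5_of_B5_eq_zero (by simp [B5_apply])

theorem nInf_mul_nOri_add : nInf * nOri + nOri * nInf = -2 := by
  have h := ι5_mul_ι5_add_swap (0, 1, 0) (0, 0, 1)
  norm_num [B5_apply, map_ofNat] at h
  exact h

theorem Nb_eq : Nb = nInf * nOri + 1 := by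
  have h : nInf * nOri - nOri * nInf = (2:ℝ) • (nInf * nOri + 1) := by
    rw [eq_sub_of_add_eq' nInf_mul_nOri_add, two_smul, ← one_add_one_eq_two (R := Cl)]
    abel
  rw [Nb, w2, h, smul_smul]
  norm_num

theorem w3_ι5_eq_mul {x y z : V5} (hxy : B5 x y = 0) (hxz : B5 x z = 0) (hyz : B5 y z = 0) :
    w3 (ι5 x) (ι5 y) (ι5 z) = ι5 x * ι5 y * ι5 z :=
  w3_eq_mul_of_anticomm (ι5_mul_ι5_of_B5_eq_zero hxy) (ι5_mul_ι5_of_B5_eq_zero hxz)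
    (ι5_mul_ι5_of_B5_eq_zero hyz)

theorem w3_ev_eq_mul {p q s : E3} (hpq : ⟪p, q⟫ = 0) (hps : ⟪p, s⟫ = 0) (hqs : ⟪q, s⟫ = 0) :
    w3 (ev p) (ev q) (ev s) = ev p * ev q * ev s :=
  w3_ι5_eq_mul (by simpa [B5_apply]) (by simpa [B5_apply]) (by simpa [B5_apply])

/-- The translation by `c`, which fixes `n` and maps `n̄` to `c + (c²/2) n + n̄`, sends a Euclidean
vector `e` to `e + (c·e) n`. -/
def transVec (c : E3) : E3 →ₗ[ℝ] V5 where
  toFun e := (e, ⟪c, e⟫, 0)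
  map_add' x y := by simp [inner_add_right]
  map_smul' s x := by simp [real_inner_smul_right]

theorem transVec_apply (c e : E3) : transVec c e = (e, ⟪c, e⟫, 0) := rfl

theorem B5_transVec (c x y : E3) : B5 (transVec c x) (transVec c y) = ⟪x, y⟫ := by
  simp [B5_apply, transVec_apply]

theorem cpt_add (c q : E3) :
    cpt (c + q) = ι5 (c, (⟪c, c⟫ + ⟪q, q⟫) / 2, 1) + ι5 (transVec c q) := by
  rw [cpt, transVec_apply, ← map_add, Prod.mk_add_mk, Prod.mk_add_mk, add_zero,
    inner_add_add_self, real_inner_comm q c]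
  congr 3
  ring

theorem w4_cpt_add {c q₁ q₂ q₃ q₄ : E3} {s : ℝ} (h₁ : ⟪q₁, q₁⟫ = s) (h₂ : ⟪q₂, q₂⟫ = s)
    (h₃ : ⟪q₃, q₃⟫ = s) (h₄ : ⟪q₄, q₄⟫ = s) :
    w4 (cpt (c + q₁)) (cpt (c + q₂)) (cpt (c + q₃)) (cpt (c + q₄)) =
      -(ι5 (c, (⟪c, c⟫ + s) / 2, 1) * w3 (ι5 (transVec c (q₁ - q₂)))
        (ι5 (transVec c (q₂ - q₃))) (ι5 (transVec c (q₃ - q₄)))) := by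
  have hflat : w4 (ι5 (transVec c q₁)) (ι5 (transVec c q₂)) (ι5 (transVec c q₃))
      (ι5 (transVec c q₄)) = 0 :=
    w4_map_eq_zero_of_finrank_lt (by simp) (ι5 ∘ₗ transVec c) q₁ q₂ q₃ q₄
  have hortho : ∀ x, ι5 (transVec c x) * ι5 (c, (⟪c, c⟫ + s) / 2, 1) =
      -(ι5 (c, (⟪c, c⟫ + s) / 2, 1) * ι5 (transVec c x)) := fun x =>
    ι5_mul_ι5_of_B5_eq_zero (by simp [B5_apply, transVec_apply])
  rw [cpt_add, cpt_add, cpt_add, cpt_add, h₁, h₂, h₃, h₄, w4_const_add, hflat, zero_sub]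
  simp only [← map_sub]
  rw [w4_eq_mul_w3_of_anticomm (hortho _) (hortho _) (hortho _)]

theorem w3_transVec_eq_det_smul (c x y z : E3) :
    w3 (ι5 (transVec c x)) (ι5 (transVec c y)) (ι5 (transVec c z)) =
      (EuclideanSpace.basisFun (Fin 3) ℝ).toBasis.det ![x, y, z] •
        (ι5 (transVec c (EuclideanSpace.single 0 1)) *
          ι5 (transVec c (EuclideanSpace.single 1 1)) *
            ι5 (transVec c (EuclideanSpace.single 2 1))) := by
  have h : w3 (ι5 (transVec c x)) (ι5 (transVec c y)) (ι5 (transVec c z)) = _ :=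
    w3_map_eq_det_smul (EuclideanSpace.basisFun (Fin 3) ℝ).toBasis (ι5 ∘ₗ transVec c) x y z
  simp only [LinearMap.comp_apply, OrthonormalBasis.coe_toBasis,
    EuclideanSpace.basisFun_apply] at h
  rw [h, w3_ι5_eq_mul] <;> simp [B5_transVec, EuclideanSpace.inner_single_left]

theorem w3_ev_eq_det_smul (x y z : E3) :
    w3 (ev x) (ev y) (ev z) = (EuclideanSpace.basisFun (Fin 3) ℝ).toBasis.det ![x, y, z] •
      (ev (EuclideanSpace.single 0 1) * ev (EuclideanSpace.single 1 1) *
        ev (EuclideanSpace.single 2 1)) := by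
  have h : w3 (ev x) (ev y) (ev z) = _ :=
    w3_map_eq_det_smul (EuclideanSpace.basisFun (Fin 3) ℝ).toBasis
      (ι5 ∘ₗ LinearMap.inl ℝ E3 (ℝ × ℝ)) x y z
  simp only [OrthonormalBasis.coe_toBasis, EuclideanSpace.basisFun_apply] at h
  rw [h, ← w3_ev_eq_mul]
  · rfl
  all_goals simp [EuclideanSpace.inner_single_left]

theorem sphere_four_vector_basis (c : E3) (r : ℝ) :
    -(ι5 (c, (⟪c, c⟫ + r ^ 2) / 2, 1) * (ι5 (transVec c (EuclideanSpace.single 0 1)) *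
      ι5 (transVec c (EuclideanSpace.single 1 1)) * ι5 (transVec c (EuclideanSpace.single 2 1)))) =
    (cpt c - (2:ℝ)⁻¹ • (r ^ 2 • nInf)) * (ev (EuclideanSpace.single 0 1) *
      ev (EuclideanSpace.single 1 1) * ev (EuclideanSpace.single 2 1)) * Nb := by
  have hc : ev c = c 0 • ev (EuclideanSpace.single 0 1) + c 1 • ev (EuclideanSpace.single 1 1)
      + c 2 • ev (EuclideanSpace.single 2 1) := by
    conv_lhs => rw [← (EuclideanSpace.basisFun (Fin 3) ℝ).sum_repr c]
    simp only [Fin.sum_univ_three, ev, EuclideanSpace.basisFun_apply,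
      EuclideanSpace.basisFun_repr, ← map_smul, ← map_add, Prod.smul_mk, Prod.mk_add_mk,
      smul_zero, add_zero]
  have hcc : ⟪c, c⟫ = c 0 * c 0 + c 1 * c 1 + c 2 * c 2 := by
    simp only [PiLp.inner_apply, RCLike.inner_apply, conj_trivial, Fin.sum_univ_three]
  have on : nOri * nInf = -(2:ℝ) • 1 - nInf * nOri := by
    rw [eq_sub_iff_add_eq', nInf_mul_nOri_add, neg_smul, ← Algebra.algebraMap_eq_smul_one,
      map_ofNat]
  have e10 : ev (EuclideanSpace.single 1 1) * ev (EuclideanSpace.single 0 1) =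
      -(ev (EuclideanSpace.single 0 1) * ev (EuclideanSpace.single 1 1)) :=
    ev_mul_ev_of_inner_eq_zero (by simp [EuclideanSpace.inner_single_left])
  have e20 : ev (EuclideanSpace.single 2 1) * ev (EuclideanSpace.single 0 1) =
      -(ev (EuclideanSpace.single 0 1) * ev (EuclideanSpace.single 2 1)) :=
    ev_mul_ev_of_inner_eq_zero (by simp [EuclideanSpace.inner_single_left])
  have e21 : ev (EuclideanSpace.single 2 1) * ev (EuclideanSpace.single 1 1) =
      -(ev (EuclideanSpace.single 1 1) * ev (EuclideanSpace.single 2 1)) :=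
    ev_mul_ev_of_inner_eq_zero (by simp [EuclideanSpace.inner_single_left])
  simp only [transVec_apply, ι5_mk, cpt, hc, Nb_eq, hcc, EuclideanSpace.inner_single_right,
    conj_trivial]
  simp only [add_mul, mul_add, sub_mul, mul_sub, smul_mul_assoc, mul_smul_comm, mul_assoc,
    neg_mul, mul_neg, mul_one, one_mul, zero_mul, mul_zero,
    ev_single_mul_self, nInf_mul_self, nOri_mul_self, nInf_mul_ev, nOri_mul_ev, on,
    mul_mul_eq_of_mul_eq (ev_single_mul_self _), mul_mul_eq_of_mul_eq nInf_mul_self,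
    mul_mul_eq_of_mul_eq (nInf_mul_ev _), mul_mul_eq_of_mul_eq (nOri_mul_ev _),
    mul_mul_eq_of_mul_eq on, mul_mul_eq_of_mul_eq e10, mul_mul_eq_of_mul_eq e20,
    mul_mul_eq_of_mul_eq e21]
  match_scalars <;> ring

/-- the sphere 4-vector P₁∧P₂∧P₃∧P₄ = (C − (1/2)r²n) i_s N. -/
theorem sphere_four_vector
    (c : E3) (r : ℝ)
    (r₁ r₂ r₃ r₄ : E3)
    (h₁ : ‖r₁‖ = 1) (h₂ : ‖r₂‖ = 1) (h₃ : ‖r₃‖ = 1) (h₄ : ‖r₄‖ = 1)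
    (p₁ p₂ p₃ p₄ : E3)
    (hp₁ : p₁ = c + r • r₁) (hp₂ : p₂ = c + r • r₂)
    (hp₃ : p₃ = c + r • r₃) (hp₄ : p₄ = c + r • r₄)
    (is : Cl)
    (his : is = w3 (ev (p₁ - p₂)) (ev (p₂ - p₃)) (ev (p₃ - p₄))) :
    w4 (cpt p₁) (cpt p₂) (cpt p₃) (cpt p₄) =
      (cpt c - (2:ℝ)⁻¹ • (r ^ 2 • nInf)) * is * Nb := by
  subst hp₁ hp₂ hp₃ hp₄ his
  have hr : ∀ k : E3, ‖k‖ = 1 → ⟪r • k, r • k⟫ = r ^ 2 := fun k hk => by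
    rw [real_inner_self_eq_norm_sq, norm_smul, hk, mul_one, Real.norm_eq_abs, sq_abs]
  rw [w4_cpt_add (hr r₁ h₁) (hr r₂ h₂) (hr r₃ h₃) (hr r₄ h₄)]
  simp only [add_sub_add_left_eq_sub]
  rw [w3_transVec_eq_det_smul, w3_ev_eq_det_smul, mul_smul_comm, mul_smul_comm, smul_mul_assoc,
    ← smul_neg, sphere_four_vector_basis]
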